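/- arXiv:2507.07702 — 2 statements merged into one kernel-verified Lean document; each statement's English description precedes it below -/
import Mathlib

section
/- Let G be a finite connected graph with edge weights η : E → ℝ such that all spanning trees of G have pairwise distinct total weights Σ_{e∈T} η(e). Let T₁ and T₂ be the spanning trees with the smallest and the second smallest total weight, respectively. Then T₁ and T₂ differ by exactly one edge, i.e. |E(T₂) \ E(T₁)| = 1. -/
open MeasureTheory Finset

attribute [local instance] Classical.propDecidable

noncomputable section RSTRECore

variable {V : Type*} [Fintype V] [DecidableEq V]

/-- `T` is a spanning tree of `G`: a subgraph (on the same vertex set) that is a tree. -/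
def IsSpanningTree (G T : SimpleGraph V) : Prop := T ≤ G ∧ T.IsTree

/-- The Hamiltonian `H(T, ω) = Σ_{e ∈ T} ω_e`. -/
def Ham (T : SimpleGraph V) (ω : Sym2 V → ℝ) : ℝ := ∑ e ∈ T.edgeFinset, ω e

/-- Gibbs weight of a spanning tree: `∏_{e ∈ T} exp(-β ω_e)`. -/
def treeGibbsWeight (β : ℝ) (ω : Sym2 V → ℝ) (T : SimpleGraph V) : ℝ :=
  ∏ e ∈ T.edgeFinset, Real.exp (-β * ω e)

/-- Quenched law of the RSTRE: probability that the random spanning tree of `G`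
(with weights `exp(-β ω_e)`) lies in the set `A`. -/
def quenchedP (G : SimpleGraph V) (β : ℝ) (ω : Sym2 V → ℝ) (A : Set (SimpleGraph V)) : ℝ :=
  (∑ T ∈ univ.filter (fun T => IsSpanningTree G T ∧ T ∈ A), treeGibbsWeight β ω T) /
    (∑ T ∈ univ.filter (fun T => IsSpanningTree G T), treeGibbsWeight β ω T)

/-- Quenched expectation of an observable of the RSTRE. -/
def quenchedE (G : SimpleGraph V) (β : ℝ) (ω : Sym2 V → ℝ) (f : SimpleGraph V → ℝ) : ℝ :=
  (∑ T ∈ univ.filter (fun T => IsSpanningTree G T), treeGibbsWeight β ω T * f T) /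
    (∑ T ∈ univ.filter (fun T => IsSpanningTree G T), treeGibbsWeight β ω T)

/-- The law of the i.i.d. environment `(ω_e)` with marginal `μ`. -/
def envMeasure (μ : Measure ℝ) : Measure (Sym2 V → ℝ) := Measure.pi fun _ => μ

/-- Averaged (annealed) law of the RSTRE, for an event which may also depend on the
environment. -/
def avgP (μ : Measure ℝ) (G : SimpleGraph V) (β : ℝ)
    (A : (Sym2 V → ℝ) → Set (SimpleGraph V)) : ℝ :=
  ∫ ω, quenchedP G β ω (A ω) ∂(envMeasure μ)

/-- Averaged (annealed) expectation of an observable of environment and tree. -/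
def avgE (μ : Measure ℝ) (G : SimpleGraph V) (β : ℝ)
    (f : (Sym2 V → ℝ) → SimpleGraph V → ℝ) : ℝ :=
  ∫ ω, quenchedE G β ω (f ω) ∂(envMeasure μ)

/-- Diameter of a graph: the maximal graph distance between two vertices. -/
def gdiam (G : SimpleGraph V) : ℕ :=
  (Finset.univ : Finset (V × V)).sup fun p => G.dist p.1 p.2

/-- Volume of a vertex set: the sum of the degrees. -/
def gvol (G : SimpleGraph V) (S : Finset V) : ℕ := ∑ v ∈ S, G.degree v

/-- Number of edges between `S` and its complement. -/
def cutCard (G : SimpleGraph V) (S : Finset V) : ℕ :=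
  (univ.filter fun p : V × V => p.1 ∈ S ∧ p.2 ∉ S ∧ G.Adj p.1 p.2).card

/-- Edge expansion of a vertex set `S`. -/
def edgeExpansion (G : SimpleGraph V) (S : Finset V) : ℝ :=
  (cutCard G S : ℝ) / min (gvol G S : ℝ) (gvol G Sᶜ : ℝ)

/-- `G` is a `b`-expander: every nonempty proper vertex set has edge expansion at least `b`. -/
def IsExpander (G : SimpleGraph V) (b : ℝ) : Prop :=
  ∀ S : Finset V, S.Nonempty → S ≠ univ → b ≤ edgeExpansion G S

/-- The generalized inverse CDF `F_μ⁻¹(p) = inf { t | F_μ(t) ≥ p }`. -/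
def invCDF (μ : Measure ℝ) (p : ℝ) : ℝ := sInf {t : ℝ | p ≤ (μ (Set.Iic t)).toReal}

/-- Assumption (A): `μ` is supported on `[0,∞)` and its CDF satisfies
`F_μ(t) = c_μ t^α` for `0 ≤ t ≤ ρ`. -/
def AssumptionA (μ : Measure ℝ) (α : ℝ) : Prop :=
  0 < α ∧ μ (Set.Iio 0) = 0 ∧
    ∃ cμ > (0:ℝ), ∃ ρ > (0:ℝ), ∀ t : ℝ, 0 ≤ t → t ≤ ρ →
      (μ (Set.Iic t)).toReal = cμ * t ^ α

end RSTRECore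

/-!
Symmetric exchange for spanning trees: given an edge `ab` of `T₁` not in `T₂`, let `xy` be the
edge where the `T₂`-path from `a` to `b` leaves the component of `a` in `T₁ - ab`. Then both
`T₁ - ab + xy` and `T₂ - xy + ab` are spanning trees, and their weights add up to
`w(T₁) + w(T₂)`. If `T₂` had a second edge outside `T₁`, neither exchanged tree would be `T₁` or
`T₂`, so by distinctness both would weigh strictly more than `w(T₂) ≥ w(T₁)`, which is absurd.
-/

namespace SimpleGraph

variable {V : Type*} {G H T : SimpleGraph V}

theorem Reachable.of_forall_adj_reachable (h : ∀ ⦃u v⦄, G.Adj u v → H.Reachable u v)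
    {u v : V} (huv : G.Reachable u v) : H.Reachable u v := by
  obtain ⟨p⟩ := huv
  induction p with
  | nil => rfl
  | cons hadj _ ih => exact (h hadj).trans ih

theorem Connected.of_forall_adj_reachable (hG : G.Connected)
    (h : ∀ ⦃u v⦄, G.Adj u v → H.Reachable u v) : H.Connected :=
  (connected_iff H).2 ⟨fun u v ↦ (hG.preconnected u v).of_forall_adj_reachable h, hG.nonempty⟩

theorem Preconnected.reachable_deleteEdges_or (hG : G.Preconnected) {a b : V} (v : V) :
    (G.deleteEdges {s(a, b)}).Reachable a v ∨ (G.deleteEdges {s(a, b)}).Reachable b v := by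
  by_contra! hv
  obtain ⟨p⟩ := hG a v
  obtain ⟨d, -, hd, hd'⟩ := p.exists_boundary_dart
    {w | (G.deleteEdges {s(a, b)}).Reachable a w ∨ (G.deleteEdges {s(a, b)}).Reachable b w}
    (.inl .rfl) (not_or.2 hv)
  by_cases hf : d.edge = s(a, b)
  · rcases Sym2.eq_iff.1 hf with ⟨-, h⟩ | ⟨-, h⟩ <;> simp [← h] at hd'
  · have hadj : (G.deleteEdges {s(a, b)}).Adj d.fst d.snd := by
      simpa [d.adj, Dart.edge, Sym2.mk_eq_mk_iff] using hf
    exact hd' (hd.imp (·.trans hadj.reachable) (·.trans hadj.reachable))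

theorem IsAcyclic.not_reachable_deleteEdges_of_mem_edges (hG : G.IsAcyclic) {a b : V}
    {p : G.Walk a b} (hp : p.IsPath) {e : Sym2 V} (he : e ∈ p.edges) :
    ¬(G.deleteEdges {e}).Reachable a b := by
  classical
  rintro ⟨q⟩
  have hpq : (⟨p, hp⟩ : G.Path a b) = ⟨_, q.toPath.isPath.mapLe (deleteEdges_le _)⟩ :=
    (hG.subsingleton_path a b).elim _ _
  rw [Subtype.mk.injEq] at hpq
  rw [hpq, Walk.edges_mapLe_eq_edges] at he
  simpa using Walk.edges_subset_edgeSet _ he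

theorem edgeSet_deleteEdges_sup_edge {a b x y : V} (hne : x ≠ y) :
    (T.deleteEdges {s(a, b)} ⊔ edge x y).edgeSet = insert s(x, y) (T.edgeSet \ {s(a, b)}) := by
  rw [edgeSet_sup, edgeSet_deleteEdges, edgeSet_edge_of_ne hne, Set.union_singleton]

theorem deleteEdges_sup_edge_le {s : Set (Sym2 V)} {x y : V} (hT : T ≤ G) (hxy : G.Adj x y) :
    T.deleteEdges s ⊔ edge x y ≤ G :=
  sup_le ((deleteEdges_le _).trans hT) ((edge_le_iff _).2 (.inr hxy))

theorem IsTree.deleteEdges_sup_edge [Finite V] (hT : T.IsTree) {a b x y : V} (hab : T.Adj a b)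
    (hax : (T.deleteEdges {s(a, b)}).Reachable a x)
    (hby : (T.deleteEdges {s(a, b)}).Reachable b y) :
    (T.deleteEdges {s(a, b)} ⊔ edge x y).IsTree := by
  set H := T.deleteEdges {s(a, b)}
  have hxy : ¬H.Reachable x y := fun h ↦
    isBridge_iff.1 (isAcyclic_iff_forall_adj_isBridge.1 hT.isAcyclic hab)
      (hax.trans (h.trans hby.symm))
  have hne : x ≠ y := fun h ↦ hxy (h ▸ .rfl)
  rw [isTree_iff_connected_and_card]
  constructor
  · refine hT.connected.of_forall_adj_reachable fun u v huv ↦ ?_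
    by_cases hf : s(u, v) = s(a, b)
    · have hxy' : (H ⊔ edge x y).Adj x y := .inr ((edge_adj ..).2 ⟨.inl ⟨rfl, rfl⟩, hne⟩)
      have hab' : (H ⊔ edge x y).Reachable a b :=
        ((hax.mono le_sup_left).trans hxy'.reachable).trans (hby.mono le_sup_left).symm
      rcases Sym2.eq_iff.1 hf with ⟨rfl, rfl⟩ | ⟨rfl, rfl⟩
      exacts [hab', hab'.symm]
    · exact (Adj.reachable (by simpa [H, huv] using hf)).mono le_sup_left
  · have hxyT : s(x, y) ∉ T.edgeSet \ {s(a, b)} := fun h ↦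
      hxy (Adj.reachable (by rwa [← edgeSet_deleteEdges] at h))
    rw [edgeSet_deleteEdges_sup_edge hne, Nat.card_coe_set_eq, Set.ncard_insert_of_notMem hxyT,
      Set.ncard_sdiff_singleton_add_one ((mem_edgeSet _).2 hab), ← Nat.card_coe_set_eq]
    exact (isTree_iff_connected_and_card.1 hT).2

theorem IsTree.exists_exchange [Finite V] {T₁ T₂ : SimpleGraph V} (h₁ : T₁.IsTree)
    (h₂ : T₂.IsTree) {a b : V} (hab₁ : T₁.Adj a b) (hab₂ : ¬T₂.Adj a b) :
    ∃ x y, T₂.Adj x y ∧ ¬T₁.Adj x y ∧ (T₁.deleteEdges {s(a, b)} ⊔ edge x y).IsTree ∧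
      (T₂.deleteEdges {s(x, y)} ⊔ edge a b).IsTree := by
  set H₁ := T₁.deleteEdges {s(a, b)}
  have hsep₁ : ¬H₁.Reachable a b :=
    isBridge_iff.1 (isAcyclic_iff_forall_adj_isBridge.1 h₁.isAcyclic hab₁)
  obtain ⟨p, hp⟩ := (h₂.connected.preconnected a b).exists_isPath
  obtain ⟨d, hdp, hx, hy⟩ := p.exists_boundary_dart {v | H₁.Reachable a v} .rfl hsep₁
  obtain ⟨⟨x, y⟩, hxy⟩ := d
  have hby : H₁.Reachable b y :=
    (h₁.connected.preconnected.reachable_deleteEdges_or y).resolve_left hy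
  refine ⟨x, y, hxy, fun hxy₁ ↦ ?_, h₁.deleteEdges_sup_edge hab₁ hx hby, ?_⟩
  · by_cases hf : s(x, y) = s(a, b)
    · exact hab₂ (show s(a, b) ∈ T₂.edgeSet from hf ▸ hxy)
    · exact hy (hx.trans (Adj.reachable (by simpa [H₁, hxy₁] using hf)))
  have hsep₂ : ¬(T₂.deleteEdges {s(x, y)}).Reachable a b :=
    h₂.isAcyclic.not_reachable_deleteEdges_of_mem_edges hp (List.mem_map_of_mem hdp)
  have hcomp := h₂.connected.preconnected.reachable_deleteEdges_or (a := x) (b := y)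
  rcases hcomp a with hxa | hya <;> rcases hcomp b with hxb | hyb
  · exact absurd (hxa.symm.trans hxb) hsep₂
  · exact h₂.deleteEdges_sup_edge hxy hxa hyb
  · rw [Sym2.eq_swap]
    exact h₂.deleteEdges_sup_edge hxy.symm (by rwa [Sym2.eq_swap]) (by rwa [Sym2.eq_swap])
  · exact absurd (hya.symm.trans hyb) hsep₂

theorem IsTree.card_edgeFinset_sdiff_comm [Fintype V] {T₁ T₂ : SimpleGraph V}
    [Fintype T₁.edgeSet] [Fintype T₂.edgeSet] [DecidableEq (Sym2 V)] (h₁ : T₁.IsTree)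
    (h₂ : T₂.IsTree) : #(T₂.edgeFinset \ T₁.edgeFinset) = #(T₁.edgeFinset \ T₂.edgeFinset) :=
  card_sdiff_eq_card_sdiff_iff.2 <| by
    have := h₁.card_edgeFinset
    have := h₂.card_edgeFinset
    omega

theorem IsTree.edgeFinset_sdiff_nonempty [Fintype V] {T₁ T₂ : SimpleGraph V}
    [Fintype T₁.edgeSet] [Fintype T₂.edgeSet] [DecidableEq (Sym2 V)] (h₁ : T₁.IsTree)
    (h₂ : T₂.IsTree) (hne : T₂ ≠ T₁) : (T₂.edgeFinset \ T₁.edgeFinset).Nonempty := by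
  refine sdiff_nonempty.2 fun hsub ↦ hne (edgeFinset_inj.1 (eq_of_subset_of_card_le hsub ?_))
  have := h₁.card_edgeFinset
  have := h₂.card_edgeFinset
  omega

end SimpleGraph

open SimpleGraph

section SpanningTrees

variable {V : Type*} [Fintype V] [DecidableEq V]

theorem Ham_deleteEdges_sup_edge {T : SimpleGraph V} {a b x y : V} (hab : T.Adj a b)
    (hxy : ¬T.Adj x y) (hne : x ≠ y) (η : Sym2 V → ℝ) :
    Ham (T.deleteEdges {s(a, b)} ⊔ edge x y) η = Ham T η - η s(a, b) + η s(x, y) := by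
  calc Ham (T.deleteEdges {s(a, b)} ⊔ edge x y) η
      = ∑ e ∈ insert s(x, y) (T.edgeFinset.erase s(a, b)), η e := by
        rw [Ham]
        congr 1
        ext e
        simp only [mem_edgeFinset, edgeSet_deleteEdges_sup_edge hne]
        simp [and_comm]
    _ = Ham T η - η s(a, b) + η s(x, y) := by
        rw [sum_insert (by simp [hxy]), Ham, 
          ← add_sum_erase _ _ (mem_edgeFinset.2 hab : s(a, b) ∈ T.edgeFinset)]
        ring

theorem IsSpanningTree.exists_exchange_pair {G T₁ T₂ : SimpleGraph V}
    (hT₁ : IsSpanningTree G T₁) (hT₂ : IsSpanningTree G T₂)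
    (hcard : 1 < #(T₂.edgeFinset \ T₁.edgeFinset)) (η : Sym2 V → ℝ) :
    ∃ T₃ T₄, IsSpanningTree G T₃ ∧ IsSpanningTree G T₄ ∧ T₃ ≠ T₁ ∧ T₃ ≠ T₂ ∧ T₄ ≠ T₁ ∧
      T₄ ≠ T₂ ∧ Ham T₃ η + Ham T₄ η = Ham T₁ η + Ham T₂ η := by
  obtain ⟨f, hf⟩ : (T₁.edgeFinset \ T₂.edgeFinset).Nonempty := by
    rw [← card_pos, ← hT₁.2.card_edgeFinset_sdiff_comm hT₂.2]
    omega
  induction f with | h a b =>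
  obtain ⟨hab₁, hab₂⟩ : T₁.Adj a b ∧ ¬T₂.Adj a b := by simpa using hf
  obtain ⟨x, y, hxy₂, hxy₁, h₃, h₄⟩ := hT₁.2.exists_exchange hT₂.2 hab₁ hab₂
  obtain ⟨e, he, hex⟩ := exists_mem_ne hcard s(x, y)
  obtain ⟨he₂, he₁⟩ : e ∈ T₂.edgeSet ∧ e ∉ T₁.edgeSet := by simpa using he
  refine ⟨_, _, ⟨deleteEdges_sup_edge_le hT₁.1 (hT₂.1 hxy₂), h₃⟩,
    ⟨deleteEdges_sup_edge_le hT₂.1 (hT₁.1 hab₁), h₄⟩,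
    fun h ↦ ?_, fun h ↦ ?_, fun h ↦ ?_, fun h ↦ ?_, ?_⟩
  · apply hxy₁
    rw [← mem_edgeSet, ← h, edgeSet_deleteEdges_sup_edge hxy₂.ne]
    exact Set.mem_insert _ _
  · rw [← h, edgeSet_deleteEdges_sup_edge hxy₂.ne] at he₂
    exact he₁ (by simp [hex] at he₂; exact he₂.1)
  · apply he₁
    rw [← h, edgeSet_deleteEdges_sup_edge hab₁.ne]
    simp [he₂, hex]
  · apply hab₂
    rw [← mem_edgeSet, ← h, edgeSet_deleteEdges_sup_edge hab₁.ne]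
    exact Set.mem_insert _ _
  · rw [Ham_deleteEdges_sup_edge hab₁ hxy₁ hxy₂.ne, Ham_deleteEdges_sup_edge hxy₂ hab₂ hab₁.ne]
    ring

end SpanningTrees

theorem stmt_7_general {V : Type*} [Fintype V] [DecidableEq V] (G : SimpleGraph V)
    (η : Sym2 V → ℝ)
    (hdistinct : ∀ T T' : SimpleGraph V, IsSpanningTree G T → IsSpanningTree G T' →
      T ≠ T' → Ham T η ≠ Ham T' η)
    (T₁ T₂ : SimpleGraph V)
    (hT₁ : IsSpanningTree G T₁) (hT₂ : IsSpanningTree G T₂) (hne : T₂ ≠ T₁)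
    (hmin : ∀ T : SimpleGraph V, IsSpanningTree G T → Ham T₁ η ≤ Ham T η)
    (hsecond : ∀ T : SimpleGraph V, IsSpanningTree G T → T ≠ T₁ →
      Ham T₂ η ≤ Ham T η) :
    (T₂.edgeFinset \ T₁.edgeFinset).card = 1 := by
  have hpos := card_pos.2 (hT₁.2.edgeFinset_sdiff_nonempty hT₂.2 hne)
  by_contra hcard
  obtain ⟨T₃, T₄, hT₃, hT₄, h₃₁, h₃₂, h₄₁, h₄₂, hHam⟩ :=
    hT₁.exists_exchange_pair hT₂ (by omega) η
  have h₂₃ : Ham T₂ η < Ham T₃ η :=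
    (hsecond T₃ hT₃ h₃₁).lt_of_ne (hdistinct T₂ T₃ hT₂ hT₃ h₃₂.symm)
  have h₂₄ : Ham T₂ η < Ham T₄ η :=
    (hsecond T₄ hT₄ h₄₁).lt_of_ne (hdistinct T₂ T₄ hT₂ hT₄ h₄₂.symm)
  linarith [hmin T₂ hT₂]

/-- If all spanning trees of a finite connected graph `G` have pairwise
distinct total weights, then the minimal-weight spanning tree `T₁` and the
second-minimal-weight spanning tree `T₂` differ by exactly one edge. -/
theorem stmt_7 {V : Type*} [Fintype V] [DecidableEq V] (G : SimpleGraph V)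
    (hG : G.Connected) (η : Sym2 V → ℝ)
    (hdistinct : ∀ T T' : SimpleGraph V, IsSpanningTree G T → IsSpanningTree G T' →
      T ≠ T' → Ham T η ≠ Ham T' η)
    (T₁ T₂ : SimpleGraph V)
    (hT₁ : IsSpanningTree G T₁) (hT₂ : IsSpanningTree G T₂) (hne : T₂ ≠ T₁)
    (hmin : ∀ T : SimpleGraph V, IsSpanningTree G T → Ham T₁ η ≤ Ham T η)
    (hsecond : ∀ T : SimpleGraph V, IsSpanningTree G T → T ≠ T₁ →
      Ham T₂ η ≤ Ham T η) :
    (T₂.edgeFinset \ T₁.edgeFinset).card = 1 :=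
  stmt_7_general G η hdistinct T₁ T₂ hT₁ hT₂ hne hmin hsecond
end

section
/- Suppose μ satisfies Assumption (A) with exponent α > 0. Let (ω_i)_{i≥1} be i.i.d. with distribution μ, let β ≥ 0, set w_i = exp(−β ω_i), ξ = E[exp(−β ω_1)], and S_m = Σ_{i=1}^m w_i. Then there exists a constant C_B = C_B(μ) > 0 such that for every m ≥ 1 and every 0 < δ < 1, P( |S_m − m ξ| ≥ δ m ξ ) ≤ 2 exp( − C_B δ² m / max{β^α, 1} ). -/
open MeasureTheory Finset

attribute [local instance] Classical.propDecidable

/-!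
Each weight `w = exp (-β ω)` lies in `[0, 1]`, and by convexity `exp (t w) ≤ 1 + (eᵗ - 1) w`,
so `E exp (t w) ≤ exp ((eᵗ - 1) ξ)`. For a sum of `m` independent such weights this gives the
multiplicative Chernoff bound `P(|S_m - m ξ| ≥ δ m ξ) ≤ 2 exp (-δ² m ξ / 4)`, whose exponent is
proportional to the mean `m ξ` rather than to `m`. It remains to bound `ξ` from below:
with `t = min ρ 1 / max β 1` we have `β t ≤ 1`, hence
`ξ ≥ e⁻¹ F_μ(t) = e⁻¹ c_μ (min ρ 1)^α / max (β^α) 1`.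
-/

open Real ProbabilityTheory

lemma Real.exp_mul_le_one_add_exp_sub_one_mul {w : ℝ} (hw : w ∈ Set.Icc (0 : ℝ) 1) (t : ℝ) :
    exp (t * w) ≤ 1 + (exp t - 1) * w := by
  have h := convexOn_exp.2 (Set.mem_univ 0) (Set.mem_univ t) (sub_nonneg.2 hw.2) hw.1
    (sub_add_cancel 1 w)
  simp only [smul_eq_mul, mul_zero, zero_add, exp_zero, mul_one] at h
  rw [mul_comm]
  linarith

lemma Real.exp_sub_one_le_add_sq {x : ℝ} (hx : |x| ≤ 1) : exp x - 1 ≤ x + x ^ 2 := by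
  linarith [(abs_le.1 (abs_exp_sub_one_sub_id_le hx)).2]

section Chernoff

variable {Ω ι : Type*} [MeasurableSpace Ω] {P : Measure Ω} [IsProbabilityMeasure P]

lemma mgf_le_exp_of_mem_Icc_zero_one {X : Ω → ℝ} (hX : AEMeasurable X P)
    (h01 : ∀ᵐ ω ∂P, X ω ∈ Set.Icc 0 1) (t : ℝ) :
    mgf X P t ≤ exp ((exp t - 1) * P[X]) := by
  have hXint : Integrable X P := Integrable.of_mem_Icc 0 1 hX h01
  calc mgf X P t ≤ ∫ ω, (1 + (exp t - 1) * X ω) ∂P :=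
        integral_mono_ae (integrable_exp_mul_of_mem_Icc hX h01)
          ((integrable_const 1).add (hXint.const_mul _))
          (h01.mono fun ω hω => exp_mul_le_one_add_exp_sub_one_mul hω t)
    _ = 1 + (exp t - 1) * P[X] := by
        rw [integral_add (integrable_const 1) (hXint.const_mul _), integral_const_mul]
        simp
    _ ≤ exp ((exp t - 1) * P[X]) := by linarith [add_one_le_exp ((exp t - 1) * P[X])]

variable [Fintype ι] {X : ι → Ω → ℝ}

lemma mgf_sum_sub_integral_le (hind : iIndepFun X P) (hmeas : ∀ i, AEMeasurable (X i) P)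
    (h01 : ∀ i, ∀ᵐ ω ∂P, X i ω ∈ Set.Icc 0 1) {t : ℝ} (ht : |t| ≤ 1) :
    mgf (fun ω => ∑ i, X i ω - ∑ i, P[X i]) P t ≤ exp (t ^ 2 * ∑ i, P[X i]) := by
  set c := ∑ i, P[X i]
  have hc : 0 ≤ c := sum_nonneg fun i _ => integral_nonneg_of_ae ((h01 i).mono fun ω h => h.1)
  have hsum : mgf (fun ω => ∑ i, X i ω) P t ≤ exp ((exp t - 1) * c) := by
    rw [← Finset.sum_fn, hind.mgf_sum₀ hmeas, Finset.mul_sum, exp_sum]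
    exact prod_le_prod (fun i _ => mgf_nonneg) fun i _ =>
      mgf_le_exp_of_mem_Icc_zero_one (hmeas i) (h01 i) t
  calc mgf (fun ω => ∑ i, X i ω - c) P t
      = mgf (fun ω => ∑ i, X i ω) P t * exp (t * -c) := by
        simp_rw [sub_eq_add_neg]
        exact mgf_add_const _
    _ ≤ exp ((exp t - 1) * c) * exp (t * -c) := by gcongr
    _ = exp ((exp t - 1 - t) * c) := by rw [← exp_add]; ring_nf
    _ ≤ exp (t ^ 2 * c) := by gcongr; linarith [exp_sub_one_le_add_sq ht]

lemma measureReal_le_abs_sum_sub_integral_le (hind : iIndepFun X P)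
    (hmeas : ∀ i, AEMeasurable (X i) P) (h01 : ∀ i, ∀ᵐ ω ∂P, X i ω ∈ Set.Icc 0 1) {δ : ℝ}
    (hδ0 : 0 ≤ δ) (hδ2 : δ ≤ 2) :
    P.real {ω | δ * (∑ i, P[X i]) ≤ |∑ i, X i ω - ∑ i, P[X i]|}
      ≤ 2 * exp (-(δ ^ 2 * (∑ i, P[X i]) / 4)) := by
  set c := ∑ i, P[X i]
  set Y := fun ω => ∑ i, X i ω - c
  have hYmeas : AEMeasurable Y P :=
    (Finset.aemeasurable_fun_sum _ fun i _ => hmeas i).sub_const c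
  have hY : ∀ᵐ ω ∂P, Y ω ∈ Set.Icc (-c) (Fintype.card ι - c) := by
    filter_upwards [ae_all_iff.2 h01] with ω hω
    have h0 : 0 ≤ ∑ i, X i ω := sum_nonneg fun i _ => (hω i).1
    have h1 : ∑ i, X i ω ≤ Fintype.card ι := by
      simpa using sum_le_sum fun i (_ : i ∈ univ) => (hω i).2
    exact ⟨by simp only [Y]; linarith, by simp only [Y]; linarith⟩
  have hchernoff : ∀ t, |t| = δ / 2 →
      exp (-(δ ^ 2 * c / 2)) * mgf Y P t ≤ exp (-(δ ^ 2 * c / 4)) := by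
    intro t ht
    have htsq : t ^ 2 = δ ^ 2 / 4 := by rw [← sq_abs, ht]; ring
    calc exp (-(δ ^ 2 * c / 2)) * mgf Y P t ≤ exp (-(δ ^ 2 * c / 2)) * exp (t ^ 2 * c) := by
          gcongr
          exact mgf_sum_sub_integral_le hind hmeas h01 (by rw [ht]; linarith)
      _ = exp (-(δ ^ 2 * c / 4)) := by rw [← exp_add, htsq]; ring_nf
  have hupper : P.real {ω | δ * c ≤ Y ω} ≤ exp (-(δ ^ 2 * c / 4)) := by
    refine (measure_ge_le_exp_mul_mgf _ (by linarith : 0 ≤ δ / 2)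
      (integrable_exp_mul_of_mem_Icc hYmeas hY)).trans
      (le_of_eq_of_le ?_ (hchernoff (δ / 2) ?_))
    · ring_nf
    · exact abs_of_nonneg (by linarith)
  have hlower : P.real {ω | Y ω ≤ -(δ * c)} ≤ exp (-(δ ^ 2 * c / 4)) := by
    refine (measure_le_le_exp_mul_mgf _ (by linarith : -(δ / 2) ≤ 0)
      (integrable_exp_mul_of_mem_Icc hYmeas hY)).trans
      (le_of_eq_of_le ?_ (hchernoff (-(δ / 2)) ?_))
    · ring_nf
    · rw [abs_neg]; exact abs_of_nonneg (by linarith)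
  calc P.real {ω | δ * c ≤ |Y ω|} ≤ P.real ({ω | δ * c ≤ Y ω} ∪ {ω | Y ω ≤ -(δ * c)}) :=
        measureReal_mono fun ω (hω : δ * c ≤ |Y ω|) => (le_abs'.1 hω).symm
    _ ≤ 2 * exp (-(δ ^ 2 * c / 4)) := by
        linarith [measureReal_union_le (μ := P) {ω | δ * c ≤ Y ω} {ω | Y ω ≤ -(δ * c)}]

end Chernoff

lemma measureReal_pi_le_abs_sum_sub_le {ι E : Type*} [Fintype ι] [MeasurableSpace E]
    {μ : Measure E} [IsProbabilityMeasure μ] {f : E → ℝ} (hf : AEMeasurable f μ)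
    (h01 : ∀ᵐ s ∂μ, f s ∈ Set.Icc 0 1) {δ : ℝ} (hδ0 : 0 ≤ δ) (hδ2 : δ ≤ 2) :
    (Measure.pi fun _ : ι => μ).real
        {x | δ * (Fintype.card ι * ∫ s, f s ∂μ) ≤
          |∑ i, f (x i) - Fintype.card ι * ∫ s, f s ∂μ|}
      ≤ 2 * exp (-(δ ^ 2 * (Fintype.card ι * ∫ s, f s ∂μ) / 4)) := by
  have hmean : ∑ i : ι, ∫ x, f (x i) ∂(Measure.pi fun _ : ι => μ)
      = Fintype.card ι * ∫ s, f s ∂μ := by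
    simp only [integral_comp_eval (μ := fun _ : ι => μ) hf.aestronglyMeasurable, sum_const,
      card_univ, nsmul_eq_mul]
  rw [← hmean]
  have heval (i : ι) := (measurePreserving_eval (fun _ : ι => μ) i).quasiMeasurePreserving
  exact measureReal_le_abs_sum_sub_integral_le (iIndepFun_pi fun _ => hf)
    (fun i => hf.comp_quasiMeasurePreserving (heval i))
    (fun i => (heval i).ae (p := fun s => f s ∈ Set.Icc 0 1) h01) hδ0 hδ2

section WeightMean

variable {μ : Measure ℝ} {β : ℝ}

lemma ae_exp_neg_mul_mem_Icc (hneg : μ (Set.Iio 0) = 0) (hβ : 0 ≤ β) :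
    ∀ᵐ s ∂μ, exp (-β * s) ∈ Set.Icc 0 1 := by
  filter_upwards [measure_eq_zero_iff_ae_notMem.1 hneg] with s hs
  have hs : 0 ≤ s := not_lt.1 hs
  exact ⟨(exp_pos _).le, exp_le_one_iff.2 (by nlinarith)⟩

lemma exp_neg_mul_mul_measureReal_Iic_le_integral [IsFiniteMeasure μ]
    (hneg : μ (Set.Iio 0) = 0) (hβ : 0 ≤ β) (t : ℝ) :
    exp (-β * t) * μ.real (Set.Iic t) ≤ ∫ s, exp (-β * s) ∂μ := by
  have hint : Integrable (fun s => exp (-β * s)) μ :=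
    Integrable.of_mem_Icc 0 1 (by fun_prop) (ae_exp_neg_mul_mem_Icc hneg hβ)
  calc exp (-β * t) * μ.real (Set.Iic t)
      = ∫ s, (Set.Iic t).indicator (fun _ => exp (-β * t)) s ∂μ := by
        rw [integral_indicator_const _ measurableSet_Iic, smul_eq_mul, mul_comm]
    _ ≤ ∫ s, exp (-β * s) ∂μ := by
        refine integral_mono ((integrable_const _).indicator measurableSet_Iic) hint fun s => ?_
        by_cases hs : s ∈ Set.Iic t
        · rw [Set.indicator_of_mem hs]
          exact exp_le_exp.2 (by nlinarith [Set.mem_Iic.1 hs])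
        · rw [Set.indicator_of_notMem hs]
          exact (exp_pos _).le

end WeightMean

lemma AssumptionA.exists_div_max_rpow_le_integral_exp {μ : Measure ℝ} [IsFiniteMeasure μ]
    {α : ℝ} (hA : AssumptionA μ α) :
    ∃ c > 0, ∀ β : ℝ, 0 ≤ β → c / max (β ^ α) 1 ≤ ∫ s, exp (-β * s) ∂μ := by
  obtain ⟨hα, hneg, cμ, hcμ, ρ, hρ, hcdf⟩ := hA
  set r := min ρ 1
  have hr : 0 < r := lt_min hρ one_pos
  refine ⟨exp (-1) * (cμ * r ^ α), by positivity, fun β hβ => ?_⟩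
  set M := max β 1
  have hM : 0 < M := lt_max_of_lt_right one_pos
  have hMα : M ^ α = max (β ^ α) 1 := by
    rw [(monotoneOn_rpow_Ici_of_exponent_nonneg hα.le).map_max (Set.mem_Ici.2 hβ)
      (Set.mem_Ici.2 zero_le_one), one_rpow]
  have ht : r / M ≤ r := div_le_self hr.le (le_max_right _ _)
  have hβt : β * (r / M) ≤ 1 := by
    calc β * (r / M) = β / M * r := by ring
      _ ≤ 1 := mul_le_one₀ ((div_le_one hM).2 (le_max_left _ _)) hr.le (min_le_right _ _)
  calc exp (-1) * (cμ * r ^ α) / max (β ^ α) 1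
      = exp (-1) * (cμ * (r / M) ^ α) := by rw [div_rpow hr.le hM.le, hMα]; ring
    _ ≤ exp (-β * (r / M)) * μ.real (Set.Iic (r / M)) := by
        rw [measureReal_def, hcdf _ (by positivity) (ht.trans (min_le_left _ _))]
        gcongr
        linarith
    _ ≤ ∫ s, exp (-β * s) ∂μ := exp_neg_mul_mul_measureReal_Iic_le_integral hneg hβ _

/-- concentration of edge-weight sums. Under Assumption (A), there is
`C_B = C_B(μ) > 0` such that for i.i.d. `(ω_i)` with law `μ`, `w_i = exp(-β ω_i)`,
`ξ = E[w_1]` and `S_m = Σ_{i<m} w_i`, for all `m ≥ 1` and `0 < δ < 1`,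
`P(|S_m - mξ| ≥ δ m ξ) ≤ 2 exp(-C_B δ² m / max{β^α, 1})`. -/
theorem stmt_11 (μ : Measure ℝ) [IsProbabilityMeasure μ] (α : ℝ)
    (hA : AssumptionA μ α) :
    ∃ CB > (0:ℝ),
      ∀ (m : ℕ), 1 ≤ m → ∀ β : ℝ, 0 ≤ β → ∀ δ : ℝ, 0 < δ → δ < 1 →
        ((Measure.pi fun _ : Fin m => μ)
            {x : Fin m → ℝ |
              δ * (m * ∫ s, Real.exp (-β * s) ∂μ) ≤
                |(∑ i, Real.exp (-β * x i)) - m * ∫ s, Real.exp (-β * s) ∂μ|}).toReal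
          ≤ 2 * Real.exp (-CB * δ ^ 2 * m / max (β ^ α) 1) := by
  obtain ⟨c, hc, hξ⟩ := hA.exists_div_max_rpow_le_integral_exp
  refine ⟨c / 4, by positivity, fun m _ β hβ δ hδ0 hδ1 => ?_⟩
  have hchernoff := measureReal_pi_le_abs_sum_sub_le (ι := Fin m) (by fun_prop)
    (ae_exp_neg_mul_mem_Icc hA.2.1 hβ) hδ0.le (by linarith)
  rw [Fintype.card_fin] at hchernoff
  refine hchernoff.trans ?_
  gcongr
  calc -(c / 4) * δ ^ 2 * m / max (β ^ α) 1 = -(δ ^ 2 * (m * (c / max (β ^ α) 1)) / 4) := by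
        field_simp
    _ ≥ -(δ ^ 2 * (m * ∫ s, exp (-β * s) ∂μ) / 4) := by gcongr; exact hξ β hβ
end
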